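/- arXiv:2104.07887 — 7 statements merged into one kernel-verified Lean document; each statement's English description precedes it below -/
import Mathlib

section
/- Let A be an N×N real symmetric positive definite matrix, φ > 0, and let x* ∈ ℝ^N satisfy ‖x*‖₂ = 1, (x*)ᵀ A x* = φ, and x*_i = 0 for all i ∈ Iᶜ, where I ⊆ {1,…,N} and Iᶜ is its complement. Then the set { (−2 dᵀ A x* − v, 2 dᵀ x*, (d_i)_{i∈Iᶜ}) : d ∈ ℝ^N, v ∈ ℝ, v ≤ 0 } equals all of ℝ × ℝ × ℝ^{|Iᶜ|} (Robinson's condition) if and only if the two vectors ((A x*)_i)_{i∈I} and (x*_i)_{i∈I} of ℝ^{|I|} are linearly independent. -/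
open Matrix

/-- Euclidean norm on `Fin N → ℝ`. -/
noncomputable def norm2 {N : ℕ} (x : Fin N → ℝ) : ℝ := Real.sqrt (∑ i, x i ^ 2)

/-- Robinson's condition at a feasible point with active volatility
constraint holds iff `((A x*)_i)_{i∈I}` and `(x*_i)_{i∈I}` are linearly independent. -/
theorem stmt_0 {N : ℕ} (A : Matrix (Fin N) (Fin N) ℝ) (hA : A.PosDef)
    (φ : ℝ) (hφ : 0 < φ) (I : Finset (Fin N)) (xs : Fin N → ℝ)
    (hnorm : norm2 xs = 1) (hact : xs ⬝ᵥ A.mulVec xs = φ)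
    (hsupp : ∀ i ∉ I, xs i = 0) :
    ({p : ℝ × ℝ × ({i : Fin N // i ∉ I} → ℝ) |
        ∃ d : Fin N → ℝ, ∃ v : ℝ, v ≤ 0 ∧
          p = (-2 * (d ⬝ᵥ A.mulVec xs) - v, 2 * (d ⬝ᵥ xs), fun i => d i.1)} = Set.univ)
      ↔ LinearIndependent ℝ
          ![(fun i : {i : Fin N // i ∈ I} => A.mulVec xs i.1),
            (fun i : {i : Fin N // i ∈ I} => xs i.1)] := by
  classical
  set u : Fin N → ℝ := A.mulVec xs with hu
  -- sum of squares is 1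
  have hsq : ∑ i, xs i ^ 2 = 1 := by
    have h := hnorm
    rw [norm2, Real.sqrt_eq_one] at h
    exact h
  have hsum1 : ∑ i ∈ I, xs i * xs i = 1 := by
    rw [← hsq]
    rw [Finset.sum_subset (Finset.subset_univ I)
      (fun i _ hi => by rw [hsupp i hi]; ring)]
    exact Finset.sum_congr rfl (fun i _ => by ring)
  have hxne : (fun i : {i : Fin N // i ∈ I} => xs i.1) ≠ 0 := by
    intro h0
    have hz : ∑ i ∈ I, xs i * xs i = 0 := by
      refine Finset.sum_eq_zero (fun i hi => ?_)
      have := congrFun h0 ⟨i, hi⟩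
      simp only [Pi.zero_apply] at this
      rw [this]; ring
    rw [hz] at hsum1
    exact one_ne_zero hsum1.symm
  -- splitting of dot products
  have hsplit : ∀ d y : Fin N → ℝ,
      d ⬝ᵥ y = (∑ i ∈ I, d i * y i) + ∑ i : {i : Fin N // i ∉ I}, d i.1 * y i.1 := by
    intro d y
    rw [dotProduct, ← Finset.sum_add_sum_compl I (fun i => d i * y i)]
    congr 1
    exact Finset.sum_subtype Iᶜ (fun i => Finset.mem_compl) (fun i => d i * y i)
  have hdx : ∀ d : Fin N → ℝ, d ⬝ᵥ xs = ∑ i ∈ I, d i * xs i := by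
    intro d
    rw [hsplit]
    have : ∑ i : {i : Fin N // i ∉ I}, d i.1 * xs i.1 = 0 :=
      Finset.sum_eq_zero (fun i _ => by rw [hsupp i.1 i.2]; ring)
    rw [this, add_zero]
  rw [linearIndependent_fin2]
  simp only [Matrix.cons_val_one, Matrix.head_cons, Matrix.cons_val_zero]
  constructor
  · -- set = univ → linear independence
    intro hset
    refine ⟨hxne, ?_⟩
    intro c hc
    have hmem := Set.eq_univ_iff_forall.mp hset
      ((-1 : ℝ), (0 : ℝ), (0 : {i : Fin N // i ∉ I} → ℝ))
    obtain ⟨d, v, hv, heq⟩ := hmem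
    rw [Prod.mk.injEq, Prod.mk.injEq] at heq
    obtain ⟨h1, h2, h3⟩ := heq
    have hd0 : ∀ i (hi : i ∉ I), d i = 0 := fun i hi => (congrFun h3 ⟨i, hi⟩).symm
    have hcu : ∀ i ∈ I, u i = c * xs i := by
      intro i hi
      have := congrFun hc ⟨i, hi⟩
      simpa using this.symm
    have hdxs : d ⬝ᵥ xs = 0 := by linarith
    have hdu : d ⬝ᵥ u = 0 := by
      rw [hsplit]
      have e1 : ∑ i : {i : Fin N // i ∉ I}, d i.1 * u i.1 = 0 :=
        Finset.sum_eq_zero (fun i _ => by rw [hd0 i.1 i.2]; ring)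
      have e2 : ∑ i ∈ I, d i * u i = c * ∑ i ∈ I, d i * xs i := by
        rw [Finset.mul_sum]
        exact Finset.sum_congr rfl (fun i hi => by rw [hcu i hi]; ring)
      rw [e1, e2, add_zero, ← hdx, hdxs, mul_zero]
    rw [hdu] at h1
    -- h1 : -1 = -2 * 0 - v
    have : v = 1 := by linarith
    linarith
  · -- linear independence → set = univ
    rintro ⟨-, hli⟩
    apply Set.eq_univ_iff_forall.mpr
    rintro ⟨a, b, w⟩
    set c : ℝ := ∑ i ∈ I, u i * xs i with hc
    set R : ℝ := ∑ i ∈ I, (u i - c * xs i) * (u i - c * xs i) with hR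
    have hRnn : 0 ≤ R := Finset.sum_nonneg (fun i _ => mul_self_nonneg _)
    have hRne : R ≠ 0 := by
      intro h0
      apply hli c
      funext i
      have hall := (Finset.sum_eq_zero_iff_of_nonneg
        (fun i _ => mul_self_nonneg (u i - c * xs i))).mp (hR ▸ h0) i.1 i.2
      have : u i.1 - c * xs i.1 = 0 := by
        nlinarith [hall]
      simp only [Pi.smul_apply, smul_eq_mul]
      linarith
    have hRpos : 0 < R := lt_of_le_of_ne hRnn (Ne.symm hRne)
    -- orthogonality facts
    have hS1 : ∑ i ∈ I, (u i - c * xs i) * xs i = 0 := by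
      have : ∑ i ∈ I, (u i - c * xs i) * xs i
          = (∑ i ∈ I, u i * xs i) - c * ∑ i ∈ I, xs i * xs i := by
        rw [Finset.mul_sum, ← Finset.sum_sub_distrib]
        exact Finset.sum_congr rfl (fun i _ => by ring)
      rw [this, hsum1, ← hc]; ring
    have hS2 : ∑ i ∈ I, (u i - c * xs i) * u i = R := by
      have : ∑ i ∈ I, (u i - c * xs i) * u i
          = (∑ i ∈ I, (u i - c * xs i) * (u i - c * xs i))
            + c * ∑ i ∈ I, (u i - c * xs i) * xs i := by
        rw [Finset.mul_sum, ← Finset.sum_add_distrib]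
        exact Finset.sum_congr rfl (fun i _ => by ring)
      rw [this, hS1, ← hR]; ring
    set W : ℝ := ∑ i : {i : Fin N // i ∉ I}, w i * u i.1 with hW
    set t : ℝ := b / 2 with ht
    set s : ℝ := (-a / 2 - W - t * c) / R with hs
    set d : Fin N → ℝ :=
      fun i => if h : i ∈ I then s * (u i - c * xs i) + t * xs i else w ⟨i, h⟩ with hd
    have hd_on : ∀ i ∈ I, d i = s * (u i - c * xs i) + t * xs i := by
      intro i hi; simp only [hd, dif_pos hi]
    have hd_off : ∀ (i : Fin N) (hi : i ∉ I), d i = w ⟨i, hi⟩ := by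
      intro i hi; simp only [hd, dif_neg hi]
    have hdxs : d ⬝ᵥ xs = b / 2 := by
      rw [hdx]
      have : ∑ i ∈ I, d i * xs i
          = s * (∑ i ∈ I, (u i - c * xs i) * xs i) + t * ∑ i ∈ I, xs i * xs i := by
        rw [Finset.mul_sum, Finset.mul_sum, ← Finset.sum_add_distrib]
        exact Finset.sum_congr rfl (fun i hi => by rw [hd_on i hi]; ring)
      rw [this, hS1, hsum1]; ring
    have hdu : d ⬝ᵥ u = -a / 2 := by
      rw [hsplit]
      have e1 : ∑ i : {i : Fin N // i ∉ I}, d i.1 * u i.1 = W := by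
        rw [hW]
        exact Finset.sum_congr rfl (fun i _ => by rw [hd_off i.1 i.2])
      have e2 : ∑ i ∈ I, d i * u i
          = s * (∑ i ∈ I, (u i - c * xs i) * u i) + t * ∑ i ∈ I, xs i * u i := by
        rw [Finset.mul_sum, Finset.mul_sum, ← Finset.sum_add_distrib]
        exact Finset.sum_congr rfl (fun i hi => by rw [hd_on i hi]; ring)
      have e3 : ∑ i ∈ I, xs i * u i = c := by
        rw [hc]; exact Finset.sum_congr rfl (fun i _ => by ring)
      rw [e1, e2, e3, hS2, hs]
      field_simp
      ring
    refine ⟨d, 0, le_refl 0, ?_⟩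
    rw [Prod.mk.injEq, Prod.mk.injEq]
    refine ⟨by rw [hdu]; ring, by rw [hdxs]; ring, ?_⟩
    funext i
    rw [hd_off i.1 i.2]
end

section
/- Let M and A be N×N real symmetric positive definite matrices, ρ > 0, φ > 0, and y ∈ ℝ^N. If x* is a local minimizer of the function x ↦ xᵀ M x + ρ‖x − y‖₂² on the set {x ∈ ℝ^N : xᵀ A x ≥ φ}, then ‖x*‖₂ ≤ max( √(φ / λ_min(A)), ‖y‖₂ ), where λ_min(A) denotes the smallest eigenvalue of A. -/
open Matrix

lemma rayleigh_lower {N : ℕ} (A : Matrix (Fin N) (Fin N) ℝ) (hA : A.IsHermitian)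
    (x : Fin N → ℝ) (hN : Nonempty (Fin N)) :
    (⨅ i, hA.eigenvalues i) * (∑ i, x i ^ 2) ≤ x ⬝ᵥ A.mulVec x := by
  classical
  set U : Matrix (Fin N) (Fin N) ℝ := (hA.eigenvectorUnitary : Matrix (Fin N) (Fin N) ℝ) with hU
  have hUu : U * star U = 1 := (Matrix.mem_unitaryGroup_iff).mp hA.eigenvectorUnitary.2
  set w : Fin N → ℝ := (star U) *ᵥ x with hw
  have hT : Uᵀ *ᵥ x = w := by
    rw [hw, Matrix.star_eq_conjTranspose, conjTranspose_eq_transpose_of_trivial]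
  have key : x ⬝ᵥ A.mulVec x = ∑ i, hA.eigenvalues i * w i ^ 2 := by
    conv_lhs => rw [hA.spectral_theorem]
    rw [Unitary.conjStarAlgAut_apply, ← hU]
    rw [← mulVec_mulVec, ← mulVec_mulVec, dotProduct_mulVec x U, ← mulVec_transpose, hT]
    simp only [mulVec_diagonal, dotProduct]
    exact Finset.sum_congr rfl fun i _ => by simp [Function.comp]; ring
  have keyn : ∑ i, x i ^ 2 = ∑ i, w i ^ 2 := by
    have h1 : ∑ i, x i ^ 2 = x ⬝ᵥ (1 : Matrix (Fin N) (Fin N) ℝ).mulVec x := by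
      simp [dotProduct, pow_two]
    rw [h1, ← hUu, ← mulVec_mulVec, dotProduct_mulVec x U, ← mulVec_transpose, hT]
    simp [dotProduct, pow_two]
    rfl
  rw [key, keyn, Finset.mul_sum]
  refine Finset.sum_le_sum fun i _ => ?_
  exact mul_le_mul_of_nonneg_right (ciInf_le (Finite.bddBelow_range _) i) (sq_nonneg _)

lemma norm2_sq_sub {N : ℕ} (u v : Fin N → ℝ) :
    norm2 (u - v) ^ 2 = ∑ i, u i ^ 2 - 2 * ∑ i, u i * v i + ∑ i, v i ^ 2 := by
  rw [norm2, Real.sq_sqrt (Finset.sum_nonneg fun i _ => sq_nonneg _)]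
  have h : ∀ i : Fin N, (u - v) i ^ 2 = u i ^ 2 - 2 * (u i * v i) + v i ^ 2 := fun i => by
    simp only [Pi.sub_apply]; ring
  rw [Finset.sum_congr rfl fun i _ => h i]
  simp only [Finset.sum_add_distrib, Finset.sum_sub_distrib]
  rw [← Finset.mul_sum]

set_option maxHeartbeats 1000000 in
/-- any local minimizer of `x ↦ xᵀMx + ρ‖x−y‖₂²` on `{x : xᵀAx ≥ φ}`
satisfies `‖x*‖₂ ≤ max(√(φ/λ_min(A)), ‖y‖₂)`. -/
theorem stmt_1 {N : ℕ} (M A : Matrix (Fin N) (Fin N) ℝ) (hM : M.PosDef) (hA : A.PosDef)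
    (ρ φ : ℝ) (hρ : 0 < ρ) (hφ : 0 < φ) (y xs : Fin N → ℝ)
    (hfeas : φ ≤ xs ⬝ᵥ A.mulVec xs)
    (hloc : ∃ ε > (0 : ℝ), ∀ z : Fin N → ℝ, φ ≤ z ⬝ᵥ A.mulVec z → norm2 (z - xs) < ε →
        xs ⬝ᵥ M.mulVec xs + ρ * norm2 (xs - y) ^ 2 ≤ z ⬝ᵥ M.mulVec z + ρ * norm2 (z - y) ^ 2) :
    norm2 xs ≤ max (Real.sqrt (φ / (⨅ i, hA.1.eigenvalues i))) (norm2 y) := by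
  classical
  by_contra hcon
  push_neg at hcon
  obtain ⟨ε, hε, hmin⟩ := hloc
  set c := ⨅ i, hA.1.eigenvalues i with hc
  have hN : Nonempty (Fin N) := by
    rcases Nat.eq_zero_or_pos N with h0 | h0
    · exfalso; subst h0
      have hz : xs ⬝ᵥ A.mulVec xs = 0 := by simp [dotProduct]
      linarith
    · exact ⟨⟨0, h0⟩⟩
  have hcpos : 0 < c := by
    obtain ⟨i0, hi0⟩ := Finite.exists_min hA.1.eigenvalues
    exact lt_of_lt_of_le (hA.eigenvalues_pos i0) (le_ciInf hi0)
  set S := ∑ i, xs i ^ 2 with hS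
  have hSnn : 0 ≤ S := Finset.sum_nonneg fun i _ => sq_nonneg _
  have hnx : norm2 xs ^ 2 = S := Real.sq_sqrt hSnn
  have hmax1 : Real.sqrt (φ / c) < norm2 xs := lt_of_le_of_lt (le_max_left _ _) hcon
  have hmax2 : norm2 y < norm2 xs := lt_of_le_of_lt (le_max_right _ _) hcon
  have hnxpos : 0 < norm2 xs := lt_of_le_of_lt (Real.sqrt_nonneg _) hmax1
  have hSpos : 0 < S := hnx ▸ pow_pos hnxpos 2
  have hxs0 : xs ≠ 0 := by
    intro h; rw [h] at hS; simp at hS; rw [hS] at hSpos; exact lt_irrefl _ hSpos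
  have hsqdc : Real.sqrt (φ / c) ^ 2 = φ / c := Real.sq_sqrt (le_of_lt (div_pos hφ hcpos))
  have hφS : φ < c * S := by
    have h1 : φ / c < S := by
      rw [← hsqdc, ← hnx]
      exact pow_lt_pow_left₀ hmax1 (Real.sqrt_nonneg _) two_ne_zero
    calc φ = c * (φ / c) := by field_simp
    _ < c * S := by exact mul_lt_mul_of_pos_left h1 hcpos
  set P := xs ⬝ᵥ A.mulVec xs with hPdef
  have hφP : φ < P := lt_of_lt_of_le hφS (rayleigh_lower A hA.1 xs hN)
  have hPpos : 0 < P := lt_trans hφ hφP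
  set Q := xs ⬝ᵥ M.mulVec xs with hQdef
  have hQpos : 0 < Q := by
    have := hM.dotProduct_mulVec_pos hxs0
    simpa using this
  set Y := ∑ i, y i ^ 2 with hYdef
  have hYnn : 0 ≤ Y := Finset.sum_nonneg fun i _ => sq_nonneg _
  have hny : norm2 y ^ 2 = Y := Real.sq_sqrt hYnn
  set B := ∑ i, xs i * y i with hB
  have hCS : B ≤ norm2 xs * norm2 y := by
    have h2 : B ^ 2 ≤ S * Y := Finset.sum_mul_sq_le_sq_mul_sq Finset.univ xs y
    have h3 : B ≤ Real.sqrt (B ^ 2) := by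
      rw [Real.sqrt_sq_eq_abs]; exact le_abs_self _
    calc B ≤ Real.sqrt (B ^ 2) := h3
    _ ≤ Real.sqrt (S * Y) := Real.sqrt_le_sqrt h2
    _ = Real.sqrt S * Real.sqrt Y := Real.sqrt_mul hSnn _
    _ = norm2 xs * norm2 y := rfl
  have hBS : B < S := by
    have h1 : norm2 xs * norm2 y < norm2 xs * norm2 xs := mul_lt_mul_of_pos_left hmax2 hnxpos
    have h2 : norm2 xs * norm2 xs = S := by rw [← hnx]; ring
    linarith
  set a := Q + ρ * S with ha
  set b := ρ * B with hbdef
  have hapos : 0 < a := by positivity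
  have hab : b < a := by
    have : ρ * B < ρ * S := mul_lt_mul_of_pos_left hBS hρ
    simp only [ha, hbdef]; linarith
  -- choose the scaling parameter
  set η := min (ε / (norm2 xs + 1)) (min ((P - φ) / (2 * P)) ((a - b) / a)) with hη
  have hηpos : 0 < η := by
    refine lt_min (div_pos hε (by positivity)) (lt_min ?_ ?_)
    · exact div_pos (by linarith) (by positivity)
    · exact div_pos (by linarith) hapos
  have hη1 : η * (norm2 xs + 1) ≤ ε := by
    have := min_le_left (ε / (norm2 xs + 1)) (min ((P - φ) / (2 * P)) ((a - b) / a))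
    rw [← hη] at this
    calc η * (norm2 xs + 1) ≤ (ε / (norm2 xs + 1)) * (norm2 xs + 1) := by
          apply mul_le_mul_of_nonneg_right this (by positivity)
    _ = ε := by field_simp
  have hη2 : η * (2 * P) ≤ P - φ := by
    have h1 : η ≤ (P - φ) / (2 * P) :=
      le_trans (min_le_right _ _) (min_le_left _ _)
    calc η * (2 * P) ≤ ((P - φ) / (2 * P)) * (2 * P) := by
          apply mul_le_mul_of_nonneg_right h1 (by positivity)
    _ = P - φ := by field_simp
  have hη3 : η * a ≤ a - b := by
    have h1 : η ≤ (a - b) / a := le_trans (min_le_right _ _) (min_le_right _ _)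
    calc η * a ≤ ((a - b) / a) * a := mul_le_mul_of_nonneg_right h1 (le_of_lt hapos)
    _ = a - b := by field_simp
  set t := 1 - η with ht
  have hzi : ∀ i, (t • xs) i = t * xs i := fun i => rfl
  have hzA : (t • xs) ⬝ᵥ A.mulVec (t • xs) = t ^ 2 * P := by
    rw [Matrix.mulVec_smul, dotProduct_smul, smul_dotProduct]
    simp only [smul_eq_mul, ← hPdef]; ring
  have hfeasz : φ ≤ (t • xs) ⬝ᵥ A.mulVec (t • xs) := by
    rw [hzA]
    have hexp : t ^ 2 * P - φ = (P - φ - η * (2 * P)) + η ^ 2 * P := by rw [ht]; ring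
    have h2 : 0 ≤ η ^ 2 * P := by positivity
    linarith
  have hclose : norm2 (t • xs - xs) < ε := by
    have hsum : ∑ i, (t • xs - xs) i ^ 2 = η ^ 2 * S := by
      rw [hS, Finset.mul_sum]
      refine Finset.sum_congr rfl fun i _ => ?_
      simp only [Pi.sub_apply, hzi, ht, Pi.smul_apply, smul_eq_mul]; ring
    have heq : norm2 (t • xs - xs) = η * norm2 xs := by
      rw [norm2, hsum, Real.sqrt_mul (sq_nonneg η), Real.sqrt_sq (le_of_lt hηpos)]
      rfl
    have h3 : η * (norm2 xs + 1) = η * norm2 xs + η := by ring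
    rw [heq]; linarith
  have hobj := hmin (t • xs) hfeasz hclose
  have hzM : (t • xs) ⬝ᵥ M.mulVec (t • xs) = t ^ 2 * Q := by
    rw [Matrix.mulVec_smul, dotProduct_smul, smul_dotProduct]
    simp only [smul_eq_mul, ← hQdef]; ring
  have hxy : norm2 (xs - y) ^ 2 = S - 2 * B + Y := norm2_sq_sub xs y
  have hzy : norm2 (t • xs - y) ^ 2 = t ^ 2 * S - 2 * (t * B) + Y := by
    rw [norm2_sq_sub]
    have e1 : ∑ i, (t • xs) i ^ 2 = t ^ 2 * S := by
      rw [hS, Finset.mul_sum]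
      exact Finset.sum_congr rfl fun i _ => by rw [hzi]; ring
    have e2 : ∑ i, (t • xs) i * y i = t * B := by
      rw [hB, Finset.mul_sum]
      exact Finset.sum_congr rfl fun i _ => by rw [hzi]; ring
    rw [e1, e2]
  rw [hzM, hxy, hzy] at hobj
  have hdiff : Q + ρ * (S - 2 * B + Y) - (t ^ 2 * Q + ρ * (t ^ 2 * S - 2 * (t * B) + Y))
      = η * ((2 - η) * a - 2 * b) := by rw [ht, ha, hbdef]; ring
  have h1 : a - b ≤ (2 - η) * a - 2 * b := by
    have : (2 - η) * a = 2 * a - η * a := by ring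
    linarith
  have h2 : 0 < η * ((2 - η) * a - 2 * b) :=
    mul_pos hηpos (lt_of_lt_of_le (sub_pos.mpr hab) h1)
  linarith
end

section
/- Let 0 ≠ x ∈ ℝ^N and let k ∈ ℕ with 1 ≤ k ≤ N. Let J ⊆ {1,…,N} with |J| = k be an index set of the k largest entries of x in absolute value, i.e., |x_i| ≥ |x_j| for every i ∈ J and j ∉ J. Define y* ∈ ℝ^N by y*_i = x_i / ‖x_J‖₂ for i ∈ J and y*_i = 0 for i ∉ J (note x_J ≠ 0 since x ≠ 0). Then y* is an optimal solution of the problem: minimize ‖y − x‖₂² over all y ∈ ℝ^N with yᵀ y = 1 and ‖y‖₀ ≤ k; that is, ‖y* − x‖₂² ≤ ‖y − x‖₂² for every y ∈ ℝ^N with yᵀy = 1 and ‖y‖₀ ≤ k, and y* itself satisfies (y*)ᵀy* = 1 and ‖y*‖₀ ≤ k. -/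
open Matrix

/-- Number of nonzero entries of a vector (the `ℓ₀` "norm"). -/
noncomputable def card0 {N : ℕ} (x : Fin N → ℝ) : ℕ :=
  (Finset.univ.filter fun i => x i ≠ 0).card

/-- the normalized restriction of `x` to an index set `J` of its `k` largest
entries in absolute value solves `min ‖y − x‖₂²  s.t.  yᵀy = 1, ‖y‖₀ ≤ k`. -/
theorem stmt_3 {N : ℕ} (x : Fin N → ℝ) (hx : x ≠ 0) (k : ℕ) (hk1 : 1 ≤ k) (hkN : k ≤ N)
    (J : Finset (Fin N)) (hJcard : J.card = k)
    (hJmax : ∀ i ∈ J, ∀ j ∉ J, |x j| ≤ |x i|)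
    (y : Fin N → ℝ)
    (hy : ∀ i, y i = if i ∈ J then x i / Real.sqrt (∑ j ∈ J, x j ^ 2) else 0) :
    (y ⬝ᵥ y = 1 ∧ card0 y ≤ k) ∧
      ∀ z : Fin N → ℝ, z ⬝ᵥ z = 1 → card0 z ≤ k →
        norm2 (y - x) ^ 2 ≤ norm2 (z - x) ^ 2 := by
  -- J is nonempty
  have hJne : J.Nonempty := Finset.card_pos.mp (by omega)
  -- some entry of x on J is nonzero
  have hex : ∃ i ∈ J, x i ≠ 0 := by
    by_contra h
    push_neg at h
    apply hx
    funext j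
    by_cases hj : j ∈ J
    · exact h j hj
    · obtain ⟨i, hi⟩ := hJne
      have := hJmax i hi j hj
      have hxi : x i = 0 := h i hi
      rw [hxi, abs_zero] at this
      exact abs_nonpos_iff.mp this
  have hsum : (0:ℝ) < ∑ j ∈ J, x j ^ 2 := by
    obtain ⟨i, hi, hxi⟩ := hex
    exact Finset.sum_pos' (fun j _ => sq_nonneg _) ⟨i, hi, by positivity⟩
  set s : ℝ := Real.sqrt (∑ j ∈ J, x j ^ 2) with hs_def
  have hs0 : 0 < s := Real.sqrt_pos.mpr hsum
  have hs2 : s ^ 2 = ∑ j ∈ J, x j ^ 2 := Real.sq_sqrt hsum.le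
  -- y ⬝ᵥ y = 1
  have hyy : y ⬝ᵥ y = 1 := by
    unfold dotProduct
    have : ∀ i, y i * y i = if i ∈ J then x i ^ 2 / s ^ 2 else 0 := by
      intro i
      rw [hy i]
      by_cases hi : i ∈ J <;> simp [hi] <;> ring
    simp_rw [this]
    rw [Finset.sum_ite_mem, Finset.univ_inter, ← Finset.sum_div, ← hs2]
    field_simp
  -- ⟨y, x⟩ = s
  have hyx : y ⬝ᵥ x = s := by
    unfold dotProduct
    have : ∀ i, y i * x i = if i ∈ J then x i ^ 2 / s else 0 := by
      intro i
      rw [hy i]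
      by_cases hi : i ∈ J <;> simp [hi] <;> ring
    simp_rw [this]
    rw [Finset.sum_ite_mem, Finset.univ_inter, ← Finset.sum_div, ← hs2]
    field_simp [pow_two]
  have hcard0y : card0 y ≤ k := by
    rw [← hJcard]
    apply Finset.card_le_card
    intro i hi
    simp only [card0, Finset.mem_filter, Finset.mem_univ, true_and] at hi
    by_contra hiJ
    exact hi (by rw [hy i]; simp [hiJ])
  refine ⟨⟨hyy, hcard0y⟩, ?_⟩
  intro z hz hzcard
  set S : Finset (Fin N) := Finset.univ.filter fun i => z i ≠ 0 with hS_def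
  have hSsum : ∀ f : Fin N → ℝ, (∀ i ∉ S, f i = 0) → ∑ i, f i = ∑ i ∈ S, f i := by
    intro f hf
    exact (Finset.sum_subset (Finset.subset_univ S) (fun i _ hi => hf i hi)).symm
  have hzS : ∀ i ∉ S, z i = 0 := by
    intro i hi
    simpa [hS_def] using hi
  -- key: ∑_{i ∈ S} x i ^ 2 ≤ ∑_{i ∈ J} x i ^ 2
  have hkey : ∑ i ∈ S, x i ^ 2 ≤ ∑ i ∈ J, x i ^ 2 := by
    have hsplit : ∀ T U : Finset (Fin N), ∑ i ∈ T, x i ^ 2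
        = ∑ i ∈ T \ U, x i ^ 2 + ∑ i ∈ T ∩ U, x i ^ 2 := by
      intro T U
      conv_lhs => rw [← Finset.sdiff_union_inter T U]
      exact Finset.sum_union (Finset.disjoint_sdiff_inter T U)
    have h4 : ∑ i ∈ S ∩ J, x i ^ 2 = ∑ i ∈ J ∩ S, x i ^ 2 := by rw [Finset.inter_comm]
    rw [hsplit S J, hsplit J S]
    have hmono : ∑ i ∈ S \ J, x i ^ 2 ≤ ∑ i ∈ J \ S, x i ^ 2 := by
      rcases Finset.eq_empty_or_nonempty (S \ J) with he | hne
      · rw [he, Finset.sum_empty]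
        exact Finset.sum_nonneg fun i _ => sq_nonneg _
      · have hcards : (S \ J).card ≤ (J \ S).card := by
          have h1 := Finset.card_sdiff_add_card_inter S J
          have h2 := Finset.card_sdiff_add_card_inter J S
          have h3 : (S ∩ J).card = (J ∩ S).card := by rw [Finset.inter_comm]
          have hScard : S.card ≤ k := hzcard
          omega
        have hJSne : (J \ S).Nonempty :=
          Finset.card_pos.mp (lt_of_lt_of_le (Finset.card_pos.mpr hne) hcards)
        set m : ℝ := (J \ S).inf' hJSne (fun i => x i ^ 2) with hm_def
        have hm0 : 0 ≤ m := Finset.le_inf' hJSne _ (fun i _ => sq_nonneg _)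
        have hterm : ∀ j ∈ S \ J, x j ^ 2 ≤ m := by
          intro j hj
          apply Finset.le_inf' hJSne
          intro i hi
          have hiJ : i ∈ J := (Finset.mem_sdiff.mp hi).1
          have hjJ : j ∉ J := (Finset.mem_sdiff.mp hj).2
          have := hJmax i hiJ j hjJ
          calc x j ^ 2 = |x j| ^ 2 := (sq_abs _).symm
            _ ≤ |x i| ^ 2 := by
                have h0 : (0:ℝ) ≤ |x j| := abs_nonneg _
                nlinarith
            _ = x i ^ 2 := sq_abs _
        calc ∑ i ∈ S \ J, x i ^ 2 ≤ (S \ J).card • m :=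
              Finset.sum_le_card_nsmul _ _ m hterm
          _ ≤ (J \ S).card • m := by
              exact nsmul_le_nsmul_left hm0 hcards
          _ ≤ ∑ i ∈ J \ S, x i ^ 2 := Finset.card_nsmul_le_sum _ _ m
                (fun i hi => Finset.inf'_le _ hi)
    linarith
  -- z ⬝ᵥ x ≤ s
  have hzz : ∑ i ∈ S, z i ^ 2 = 1 := by
    rw [← hz]
    unfold dotProduct
    simp_rw [← pow_two]
    exact (hSsum (fun i => z i ^ 2) (fun i hi => by simp [hzS i hi])).symm
  have hzx : z ⬝ᵥ x ≤ s := by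
    have heq : z ⬝ᵥ x = ∑ i ∈ S, z i * x i := by
      unfold dotProduct
      exact hSsum _ (fun i hi => by simp [hzS i hi])
    have hcs := Finset.sum_mul_sq_le_sq_mul_sq S z x
    rw [hzz, one_mul] at hcs
    have : (z ⬝ᵥ x) ^ 2 ≤ s ^ 2 := by
      rw [heq, hs2]
      exact le_trans hcs hkey
    nlinarith
  -- expansion of the objective
  have expand : ∀ w : Fin N → ℝ, w ⬝ᵥ w = 1 →
      norm2 (w - x) ^ 2 = 1 - 2 * (w ⬝ᵥ x) + ∑ i, x i ^ 2 := by
    intro w hw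
    unfold norm2
    rw [Real.sq_sqrt (Finset.sum_nonneg fun i _ => sq_nonneg _)]
    unfold dotProduct at hw ⊢
    simp only [Pi.sub_apply]
    have h1 : ∀ i, (w i - x i) ^ 2 = w i * w i - 2 * (w i * x i) + x i ^ 2 :=
      fun i => by ring
    simp_rw [h1, Finset.sum_add_distrib, Finset.sum_sub_distrib, ← Finset.mul_sum, hw]
  rw [expand y hyy, expand z hz, hyx]
  linarith
end

section
/- Let M and A be N×N real symmetric positive definite matrices, φ > 0, k ∈ ℕ with 1 ≤ k ≤ N. Let (ρ_j) be positive reals with ρ_j → ∞, and for each j let (x^j, y^j) be a saddle point of the penalty problem with parameter ρ_j. Suppose the sequence ((x^j, y^j)) converges to (x*, y*) with x* = y* and ‖x*‖₂ = 1, and suppose there is an index subset L ⊆ {1,…,N} with |L| = k such that y^j_i = 0 for all i ∉ L and all j (hence x*_i = 0 for all i ∉ L). Assume further that whenever (x*)ᵀAx* = φ, the vectors ((Ax*)_i)_{i∈L} and (x*_i)_{i∈L} are linearly independent (Robinson's condition). Then x* is a KKT point: there exist λ ≥ 0, μ ∈ ℝ, and w ∈ ℝ^N with w_i = 0 for all i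 ∈ L such that M x* − λ A x* + μ x* + w = 0, λ((x*)ᵀAx* − φ) = 0, (x*)ᵀAx* ≥ φ, and ‖x*‖₂ = 1. -/
open Matrix

/-- The quadratic penalty function `q_ρ(x,y) = xᵀMx + ρ‖x−y‖₂²`. -/
noncomputable def qpen {N : ℕ} (M : Matrix (Fin N) (Fin N) ℝ) (ρ : ℝ)
    (x y : Fin N → ℝ) : ℝ :=
  x ⬝ᵥ M.mulVec x + ρ * norm2 (x - y) ^ 2


open Filter

lemma norm2_sq' {N : ℕ} (z : Fin N → ℝ) : Real.sqrt (∑ i, z i ^ 2) ^ 2 = z ⬝ᵥ z := by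
  rw [Real.sq_sqrt (by positivity)]
  simp [dotProduct, sq]


lemma dot_symm {N : ℕ} {A : Matrix (Fin N) (Fin N) ℝ} (hA : Aᵀ = A) (x v : Fin N → ℝ) :
    x ⬝ᵥ A.mulVec v = (A.mulVec x) ⬝ᵥ v := by
  rw [dotProduct_mulVec, ← hA, vecMul_transpose, hA]

lemma expand_quad {N : ℕ} {A : Matrix (Fin N) (Fin N) ℝ} (hA : Aᵀ = A) (x v : Fin N → ℝ) (t : ℝ) :
    (x + t • v) ⬝ᵥ A.mulVec (x + t • v)
      = x ⬝ᵥ A.mulVec x + 2*t*((A.mulVec x) ⬝ᵥ v) + t^2*(v ⬝ᵥ A.mulVec v) := by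
  have h1 := dot_symm hA x v
  simp only [mulVec_add, mulVec_smul, dotProduct_add, add_dotProduct, dotProduct_smul,
    smul_dotProduct, smul_eq_mul]
  rw [h1, dotProduct_comm v (A.mulVec x)]; ring

lemma expand_sq {N : ℕ} (x y v : Fin N → ℝ) (t : ℝ) :
    (x + t • v - y) ⬝ᵥ (x + t • v - y)
      = (x - y) ⬝ᵥ (x - y) + 2*t*((x - y) ⬝ᵥ v) + t^2*(v ⬝ᵥ v) := by
  have : x + t • v - y = (x - y) + t • v := by abel
  rw [this]
  simp only [dotProduct_add, add_dotProduct, dotProduct_smul, smul_dotProduct, smul_eq_mul]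
  rw [dotProduct_comm v (x - y)]; ring

lemma kkt_step {N : ℕ} (M A : Matrix (Fin N) (Fin N) ℝ) (hM : M.PosDef) (hA : A.PosDef)
    (φ ρ : ℝ) (hφ : 0 < φ) (hρ : 0 < ρ) (x y : Fin N → ℝ)
    (hx : φ ≤ x ⬝ᵥ A.mulVec x)
    (hmin : ∀ z, φ ≤ z ⬝ᵥ A.mulVec z →
      x ⬝ᵥ M.mulVec x + ρ * ((x - y) ⬝ᵥ (x - y)) ≤ z ⬝ᵥ M.mulVec z + ρ * ((z - y) ⬝ᵥ (z - y))) :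
    ∃ lam : ℝ, 0 ≤ lam ∧ M.mulVec x + ρ • (x - y) = lam • A.mulVec x ∧
      lam * (x ⬝ᵥ A.mulVec x - φ) = 0 := by
  have hAsym : Aᵀ = A := hA.isHermitian
  have hMsym : Mᵀ = M := hM.isHermitian
  set a : Fin N → ℝ := A.mulVec x with ha
  set u : Fin N → ℝ := M.mulVec x + ρ • (x - y) with hu
  -- real expansion of the objective along a line
  have hudot : ∀ v : Fin N → ℝ, u ⬝ᵥ v = (M.mulVec x) ⬝ᵥ v + ρ * ((x - y) ⬝ᵥ v) := by
    intro v
    simp [hu, add_dotProduct, smul_dotProduct, smul_eq_mul]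
  have hobj : ∀ (v : Fin N → ℝ) (t : ℝ),
      (x + t • v) ⬝ᵥ M.mulVec (x + t • v) + ρ * ((x + t • v - y) ⬝ᵥ (x + t • v - y))
      = (x ⬝ᵥ M.mulVec x + ρ * ((x - y) ⬝ᵥ (x - y)))
        + 2*t*(u ⬝ᵥ v) + t^2*(v ⬝ᵥ M.mulVec v + ρ * (v ⬝ᵥ v)) := by
    intro v t
    rw [expand_quad hMsym, expand_sq, hudot]
    ring
  -- the basic directional argument
  have hkey : ∀ (v : Fin N → ℝ) (t₀ : ℝ), 0 < t₀ →
      (∀ t, 0 < t → t ≤ t₀ → φ ≤ (x + t • v) ⬝ᵥ A.mulVec (x + t • v)) → 0 ≤ u ⬝ᵥ v := by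
    intro v t₀ ht₀ hfeas
    by_contra hneg
    push_neg at hneg
    set c : ℝ := v ⬝ᵥ M.mulVec v + ρ * (v ⬝ᵥ v) with hc
    have hc0 : 0 ≤ c := by
      have h1 := hM.posSemidef.dotProduct_mulVec_nonneg v
      have h2 : (0:ℝ) ≤ v ⬝ᵥ v :=
        Finset.sum_nonneg fun i _ => mul_self_nonneg _
      have h1' : (0:ℝ) ≤ v ⬝ᵥ M.mulVec v := by simpa using h1
      positivity
    set t : ℝ := min t₀ (-(u ⬝ᵥ v)/(c+1)) with htdef
    have htpos : 0 < t := lt_min ht₀ (div_pos (by linarith) (by linarith))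
    have htle : t ≤ t₀ := min_le_left _ _
    have hmin' := hmin (x + t • v) (hfeas t htpos htle)
    rw [hobj v t] at hmin'
    have htc : t * c ≤ -(u ⬝ᵥ v) := by
      have h1 : t ≤ -(u ⬝ᵥ v)/(c+1) := min_le_right _ _
      have h2 : t * c ≤ (-(u ⬝ᵥ v)/(c+1)) * c := by
        apply mul_le_mul_of_nonneg_right h1 hc0
      calc t * c ≤ (-(u ⬝ᵥ v)/(c+1)) * c := h2
        _ ≤ -(u ⬝ᵥ v) := by
            rw [div_mul_eq_mul_div, div_le_iff₀ (by linarith)]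
            nlinarith
    nlinarith [htpos, hmin']
  rcases eq_or_lt_of_le hx with heq | hlt
  · -- active case
    have hdir : ∀ v : Fin N → ℝ, 0 ≤ a ⬝ᵥ v → 0 ≤ u ⬝ᵥ v := by
      intro v hav
      apply hkey v 1 one_pos
      intro t ht _
      rw [expand_quad hAsym]
      have hvA : (0:ℝ) ≤ v ⬝ᵥ A.mulVec v := by
        have := hA.posSemidef.dotProduct_mulVec_nonneg v; simpa using this
      nlinarith [hx]
    have horth : ∀ v : Fin N → ℝ, a ⬝ᵥ v = 0 → u ⬝ᵥ v = 0 := by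
      intro v hav
      have h1 := hdir v (le_of_eq hav.symm)
      have h2 := hdir (-v) (by rw [dotProduct_neg, hav]; simp)
      rw [dotProduct_neg] at h2
      linarith
    have hane : a ≠ 0 := by
      intro h0
      rw [h0, dotProduct_zero] at hx
      linarith
    have haa : 0 < a ⬝ᵥ a := by
      rcases lt_or_eq_of_le (Finset.sum_nonneg fun i _ => mul_self_nonneg (a i) : (0:ℝ) ≤ a ⬝ᵥ a) with h | h
      · exact h
      · exact absurd (dotProduct_self_eq_zero.mp h.symm) hane
    refine ⟨(u ⬝ᵥ a)/(a ⬝ᵥ a), div_nonneg (hdir a haa.le) haa.le, ?_, by rw [← heq]; ring⟩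
    set lam : ℝ := (u ⬝ᵥ a)/(a ⬝ᵥ a) with hlam
    have hav0 : a ⬝ᵥ (u - lam • a) = 0 := by
      rw [dotProduct_sub, dotProduct_smul, smul_eq_mul, hlam, dotProduct_comm a u]
      field_simp
      ring
    have huv0 : u ⬝ᵥ (u - lam • a) = 0 := horth _ hav0
    have hvv0 : (u - lam • a) ⬝ᵥ (u - lam • a) = 0 := by
      rw [sub_dotProduct, smul_dotProduct, smul_eq_mul, huv0, hav0]
      ring
    have h0 := dotProduct_self_eq_zero.mp hvv0
    rwa [sub_eq_zero] at h0
  · -- inactive case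
    have hdir : ∀ v : Fin N → ℝ, 0 ≤ u ⬝ᵥ v := by
      intro v
      set t₀ : ℝ := (x ⬝ᵥ A.mulVec x - φ)/(2*|a ⬝ᵥ v| + 1) with ht₀
      have ht₀pos : 0 < t₀ := by
        apply div_pos (by linarith) (by positivity)
      apply hkey v t₀ ht₀pos
      intro t ht htle
      rw [expand_quad hAsym]
      have hvA : (0:ℝ) ≤ v ⬝ᵥ A.mulVec v := by
        have := hA.posSemidef.dotProduct_mulVec_nonneg v; simpa using this
      have habs : a ⬝ᵥ v ≥ -|a ⬝ᵥ v| := neg_abs_le _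
      have h2 : t * (2*|a ⬝ᵥ v| + 1) ≤ x ⬝ᵥ A.mulVec x - φ := by
        rw [ht₀] at htle
        rw [← le_div_iff₀ (by positivity)]
        exact htle
      nlinarith [abs_nonneg (a ⬝ᵥ v)]
    have hu0 : u = 0 := by
      have h1 := hdir u
      have h2 := hdir (-u)
      rw [dotProduct_neg] at h2
      exact dotProduct_self_eq_zero.mp (le_antisymm (by linarith) h1)
    refine ⟨0, le_refl _, ?_, by ring⟩
    simpa using hu0


lemma y_eq {N : ℕ} (x y : Fin N → ℝ) (L : Finset (Fin N)) (hyL : ∀ i ∉ L, y i = 0)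
    (hy1 : y ⬝ᵥ y = 1) (n : ℝ) (hn : 0 < n) (hn2 : n^2 = ∑ i ∈ L, x i^2)
    (hmax : n ≤ ∑ i ∈ L, x i * y i) : ∀ i ∈ L, y i = x i / n := by
  have hyy : ∑ i ∈ L, y i^2 = 1 := by
    rw [← hy1]
    rw [dotProduct]
    rw [← Finset.sum_subset (Finset.subset_univ L) (fun i _ hi => by rw [hyL i hi]; ring)]
    exact Finset.sum_congr rfl fun i _ => (sq (y i)).symm ▸ rfl
  have hexp : ∑ i ∈ L, (x i / n - y i)^2
      = (∑ i ∈ L, x i^2)/n^2 - 2*(∑ i ∈ L, x i * y i)/n + ∑ i ∈ L, y i^2 := by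
    rw [Finset.mul_sum, Finset.sum_div, Finset.sum_div, ← Finset.sum_sub_distrib, ← Finset.sum_add_distrib]
    apply Finset.sum_congr rfl
    intro i _
    field_simp
    ring
  have hS : ∑ i ∈ L, (x i / n - y i)^2 ≤ 0 := by
    rw [hexp, ← hn2, hyy]
    have h1 : 2*n/n ≤ 2*(∑ i ∈ L, x i * y i)/n := by gcongr
    have h2 : 2*n/n = 2 := by field_simp
    have h3 : n^2/n^2 = 1 := by
      rw [div_self (by positivity)]
    linarith
  have hS0 : ∑ i ∈ L, (x i / n - y i)^2 = 0 :=
    le_antisymm hS (Finset.sum_nonneg fun i _ => sq_nonneg _)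
  intro i hi
  have := (Finset.sum_eq_zero_iff_of_nonneg (fun i _ => sq_nonneg (x i / n - y i))).mp hS0 i hi
  have := pow_eq_zero_iff (n := 2) (by norm_num) |>.mp this
  linarith [this]

/-- under Robinson's condition, the limit `x*` of a convergent sequence of
saddle points of the penalty problems with `ρ_j → ∞` is a KKT point of the restricted
problem `(P')` with index set `L`. -/
theorem stmt_8 {N : ℕ} (M A : Matrix (Fin N) (Fin N) ℝ) (hM : M.PosDef) (hA : A.PosDef)
    (φ : ℝ) (hφ : 0 < φ) (k : ℕ) (hk1 : 1 ≤ k) (hkN : k ≤ N)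
    (ρ : ℕ → ℝ) (hρpos : ∀ j, 0 < ρ j)
    (hρlim : Filter.Tendsto ρ Filter.atTop Filter.atTop)
    (x y : ℕ → Fin N → ℝ)
    (hX : ∀ j, φ ≤ x j ⬝ᵥ A.mulVec (x j))
    (hY : ∀ j, y j ⬝ᵥ y j = 1 ∧ card0 (y j) ≤ k)
    (hxmin : ∀ j, ∀ z : Fin N → ℝ, φ ≤ z ⬝ᵥ A.mulVec z →
        qpen M (ρ j) (x j) (y j) ≤ qpen M (ρ j) z (y j))
    (hymin : ∀ j, ∀ z : Fin N → ℝ, z ⬝ᵥ z = 1 → card0 z ≤ k →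
        qpen M (ρ j) (x j) (y j) ≤ qpen M (ρ j) (x j) z)
    (xs : Fin N → ℝ)
    (hxconv : Filter.Tendsto x Filter.atTop (nhds xs))
    (hyconv : Filter.Tendsto y Filter.atTop (nhds xs))
    (hxnorm : norm2 xs = 1)
    (L : Finset (Fin N)) (hLcard : L.card = k)
    (hsupp : ∀ j, ∀ i ∉ L, y j i = 0)
    (hRob : xs ⬝ᵥ A.mulVec xs = φ →
        LinearIndependent ℝ
          ![(fun i : {i : Fin N // i ∈ L} => A.mulVec xs i.1),
            (fun i : {i : Fin N // i ∈ L} => xs i.1)]) :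
    ∃ lam μ : ℝ, ∃ w : Fin N → ℝ, 0 ≤ lam ∧ (∀ i ∈ L, w i = 0) ∧
      M.mulVec xs - lam • A.mulVec xs + μ • xs + w = 0 ∧
      lam * (xs ⬝ᵥ A.mulVec xs - φ) = 0 ∧
      φ ≤ xs ⬝ᵥ A.mulVec xs ∧ norm2 xs = 1 := by
  classical
  have hq : ∀ (r : ℝ) (u v : Fin N → ℝ),
      qpen M r u v = u ⬝ᵥ M.mulVec u + r * ((u - v) ⬝ᵥ (u - v)) := by
    intro r u v; rw [qpen, norm2, norm2_sq']
  -- per-j multipliers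
  have hlam : ∀ j, ∃ lam, 0 ≤ lam ∧
      M.mulVec (x j) + ρ j • (x j - y j) = lam • A.mulVec (x j) ∧
      lam * (x j ⬝ᵥ A.mulVec (x j) - φ) = 0 := by
    intro j
    apply kkt_step M A hM hA φ (ρ j) hφ (hρpos j) (x j) (y j) (hX j)
    intro z hz
    have := hxmin j z hz
    rwa [hq, hq] at this
  choose lam0 hlam0 hlam1 hlam2 using hlam
  have hxi : ∀ i, Tendsto (fun j => x j i) atTop (nhds (xs i)) :=
    fun i => tendsto_pi_nhds.mp hxconv i
  have hyi : ∀ i, Tendsto (fun j => y j i) atTop (nhds (xs i)) :=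
    fun i => tendsto_pi_nhds.mp hyconv i
  have hxsL : ∀ i ∉ L, xs i = 0 := by
    intro i hi
    have h1 : Tendsto (fun j => y j i) atTop (nhds 0) :=
      tendsto_const_nhds.congr (fun j => (hsupp j i hi).symm)
    exact tendsto_nhds_unique (hyi i) h1
  have hsum1 : ∑ i, xs i ^ 2 = 1 := Real.sqrt_eq_one.mp hxnorm
  have hsumL : ∑ i ∈ L, xs i ^ 2 = 1 := by
    rw [← hsum1]
    exact (Finset.sum_subset (Finset.subset_univ L)
      (fun i _ hi => by rw [hxsL i hi]; ring))
  set n : ℕ → ℝ := fun j => Real.sqrt (∑ i ∈ L, x j i ^ 2) with hn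
  have hntend : Tendsto n atTop (nhds 1) := by
    have h1 : Tendsto (fun j => ∑ i ∈ L, x j i ^ 2) atTop (nhds (∑ i ∈ L, xs i ^ 2)) :=
      tendsto_finset_sum _ (fun i _ => (hxi i).pow 2)
    rw [hsumL] at h1
    have h2 := (Real.continuous_sqrt.tendsto 1).comp h1
    simpa [hn, Real.sqrt_one, Function.comp_def] using h2
  have hnpos : ∀ᶠ j in atTop, 0 < n j := hntend.eventually (eventually_gt_nhds one_pos)
  set c : ℕ → ℝ := fun j => if 0 < n j then ρ j * (1 - 1/(n j)) else 0 with hc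
  -- eventual stationarity equation on L
  have Heq : ∀ᶠ j in atTop, ∀ i ∈ L,
      (M.mulVec (x j)) i + c j * x j i - lam0 j * (A.mulVec (x j)) i = 0 := by
    filter_upwards [hnpos] with j hnj
    have hn2 : (n j)^2 = ∑ i ∈ L, x j i ^ 2 := Real.sq_sqrt (by positivity)
    have hyy : y j ⬝ᵥ y j = 1 := (hY j).1
    set z : Fin N → ℝ := fun i => if i ∈ L then x j i / n j else 0 with hz
    have hsumz : ∑ i ∈ L, (x j i / n j) * (x j i / n j) = 1 := by
      have h1 : ∑ i ∈ L, (x j i / n j) * (x j i / n j)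
          = (∑ i ∈ L, x j i ^ 2)/(n j)^2 := by
        rw [Finset.sum_div]
        exact Finset.sum_congr rfl fun i _ => by field_simp
      rw [h1, ← hn2, div_self (by positivity)]
    have hz1 : z ⬝ᵥ z = 1 := by
      rw [dotProduct]
      have h0 : ∀ i, z i * z i = if i ∈ L then (x j i / n j) * (x j i / n j) else 0 := by
        intro i; by_cases h : i ∈ L <;> simp [hz, h]
      rw [Finset.sum_congr rfl (fun i _ => h0 i), Finset.sum_ite_mem, Finset.univ_inter, hsumz]
    have hzcard : card0 z ≤ k := by
      rw [card0, ← hLcard]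
      apply Finset.card_le_card
      intro i hi
      rw [Finset.mem_filter] at hi
      by_contra h
      exact hi.2 (by simp [hz, h])
    have hq' := hymin j z hz1 hzcard
    rw [hq, hq] at hq'
    have hdot : ∀ w : Fin N → ℝ,
        (x j - w) ⬝ᵥ (x j - w) = x j ⬝ᵥ x j - 2*(x j ⬝ᵥ w) + w ⬝ᵥ w := by
      intro w
      simp only [dotProduct_sub, sub_dotProduct]
      rw [dotProduct_comm w (x j)]; ring
    have hxz : x j ⬝ᵥ z = n j := by
      rw [dotProduct]
      have h0 : ∀ i, x j i * z i = if i ∈ L then x j i * (x j i / n j) else 0 := by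
        intro i; by_cases h : i ∈ L <;> simp [hz, h]
      rw [Finset.sum_congr rfl (fun i _ => h0 i), Finset.sum_ite_mem, Finset.univ_inter]
      have h1 : ∑ i ∈ L, x j i * (x j i / n j) = (∑ i ∈ L, x j i ^ 2)/(n j) := by
        rw [Finset.sum_div]
        exact Finset.sum_congr rfl fun i _ => by field_simp
      rw [h1, ← hn2]
      field_simp [pow_two]
    have hxy : x j ⬝ᵥ y j = ∑ i ∈ L, x j i * y j i := by
      rw [dotProduct]
      exact (Finset.sum_subset (Finset.subset_univ L)
        (fun i _ hi => by rw [hsupp j i hi, mul_zero])).symm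
    have hmax : n j ≤ ∑ i ∈ L, x j i * y j i := by
      rw [← hxy]
      have h1 := hq'
      rw [hdot (y j), hdot z, hyy, hz1, hxz] at h1
      have hρ := hρpos j
      nlinarith [h1]
    have hyeq := y_eq (x j) (y j) L (hsupp j) hyy (n j) hnj hn2 hmax
    intro i hi
    have hstat := congrFun (hlam1 j) i
    simp only [Pi.add_apply, Pi.smul_apply, Pi.sub_apply, smul_eq_mul] at hstat
    rw [hyeq i hi] at hstat
    rw [hc]
    simp only [if_pos hnj]
    have hnne : n j ≠ 0 := hnj.ne'
    field_simp at hstat ⊢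
    linarith [hstat]
  -- normalization
  set s : ℕ → ℝ := fun j => 1 + lam0 j + |c j| with hs
  have hspos : ∀ j, 0 < s j := by
    intro j
    have h1 := hlam0 j
    have h2 := abs_nonneg (c j)
    simp only [hs]; linarith
  set p : ℕ → (Fin 3 → ℝ) := fun j => ![1/s j, lam0 j/s j, c j/s j] with hp
  have hpmem : ∀ j, p j ∈ Set.Icc (fun _ : Fin 3 => (-1:ℝ)) (fun _ => 1) := by
    intro j
    have h1 := hlam0 j
    have h2 := abs_nonneg (c j)
    have h3 := hspos j
    have h4 : -|c j| ≤ c j := neg_abs_le _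
    have h5 : c j ≤ |c j| := le_abs_self _
    constructor <;> intro i <;> fin_cases i
    · show (-1:ℝ) ≤ 1/s j
      have h6 : 0 < 1/s j := by positivity
      linarith
    · show (-1:ℝ) ≤ lam0 j/s j
      have h6 : 0 ≤ lam0 j/s j := div_nonneg h1 h3.le
      linarith
    · show (-1:ℝ) ≤ c j/s j
      rw [le_div_iff₀ h3]
      simp only [hs]
      nlinarith
    · show 1/s j ≤ (1:ℝ)
      rw [div_le_one h3]
      simp only [hs]; linarith
    · show lam0 j/s j ≤ (1:ℝ)
      rw [div_le_one h3]
      simp only [hs]; linarith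
    · show c j/s j ≤ (1:ℝ)
      rw [div_le_one h3]
      simp only [hs]; linarith
  obtain ⟨aL, _, σ, hσ, hptend⟩ := (isCompact_Icc).tendsto_subseq hpmem
  have hσtop : Tendsto σ atTop atTop := hσ.tendsto_atTop
  set T := aL 0 with hTdef
  set Λ := aL 1 with hΛdef
  set C := aL 2 with hCdef
  have hT : Tendsto (fun j => 1/s (σ j)) atTop (nhds T) := by
    have := tendsto_pi_nhds.mp hptend 0
    simpa [hp, Function.comp] using this
  have hΛt : Tendsto (fun j => lam0 (σ j)/s (σ j)) atTop (nhds Λ) := by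
    have := tendsto_pi_nhds.mp hptend 1
    simpa [hp, Function.comp] using this
  have hCt : Tendsto (fun j => c (σ j)/s (σ j)) atTop (nhds C) := by
    have := tendsto_pi_nhds.mp hptend 2
    simpa [hp, Function.comp] using this
  have hsum : T + Λ + |C| = 1 := by
    have h1 : Tendsto (fun j => 1/s (σ j) + lam0 (σ j)/s (σ j) + |c (σ j)/s (σ j)|)
        atTop (nhds (T + Λ + |C|)) := (hT.add hΛt).add hCt.abs
    have h2 : ∀ j : ℕ, 1/s (σ j) + lam0 (σ j)/s (σ j) + |c (σ j)/s (σ j)| = 1 := by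
      intro j
      rw [abs_div, abs_of_pos (hspos _), ← add_div, ← add_div]
      exact div_self (hspos _).ne'
    rw [tendsto_congr h2] at h1
    exact tendsto_nhds_unique h1 tendsto_const_nhds
  have hTnn : 0 ≤ T := ge_of_tendsto' hT (fun j => (one_div_pos.mpr (hspos _)).le)
  have hΛnn : 0 ≤ Λ := ge_of_tendsto' hΛt (fun j => div_nonneg (hlam0 _) (hspos _).le)
  have hMlim : ∀ i, Tendsto (fun j => (M.mulVec (x (σ j))) i) atTop (nhds ((M.mulVec xs) i)) := by
    intro i
    simp only [mulVec, dotProduct]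
    exact tendsto_finset_sum _ (fun l _ => (((hxi l).comp hσtop).const_mul _))
  have hAlim : ∀ i, Tendsto (fun j => (A.mulVec (x (σ j))) i) atTop (nhds ((A.mulVec xs) i)) := by
    intro i
    simp only [mulVec, dotProduct]
    exact tendsto_finset_sum _ (fun l _ => (((hxi l).comp hσtop).const_mul _))
  have hxilim : ∀ i, Tendsto (fun j => x (σ j) i) atTop (nhds (xs i)) :=
    fun i => (hxi i).comp hσtop
  have hlimeq : ∀ i ∈ L, T * (M.mulVec xs) i + C * xs i - Λ * (A.mulVec xs) i = 0 := by
    intro i hi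
    have hG : Tendsto (fun j => (1/s (σ j)) * (M.mulVec (x (σ j))) i
        + (c (σ j)/s (σ j)) * x (σ j) i - (lam0 (σ j)/s (σ j)) * (A.mulVec (x (σ j))) i)
        atTop (nhds (T * (M.mulVec xs) i + C * xs i - Λ * (A.mulVec xs) i)) :=
      ((hT.mul (hMlim i)).add (hCt.mul (hxilim i))).sub (hΛt.mul (hAlim i))
    have hG0 : ∀ᶠ j in atTop, (1/s (σ j)) * (M.mulVec (x (σ j))) i
        + (c (σ j)/s (σ j)) * x (σ j) i - (lam0 (σ j)/s (σ j)) * (A.mulVec (x (σ j))) i = 0 := by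
      filter_upwards [hσtop.eventually Heq] with j hj
      have h1 := hj i hi
      have h2 : (1/s (σ j)) * (M.mulVec (x (σ j))) i
          + (c (σ j)/s (σ j)) * x (σ j) i - (lam0 (σ j)/s (σ j)) * (A.mulVec (x (σ j))) i
          = (1/s (σ j)) * ((M.mulVec (x (σ j))) i + c (σ j) * x (σ j) i
              - lam0 (σ j) * (A.mulVec (x (σ j))) i) := by ring
      rw [h2, h1, mul_zero]
    have := hG.congr' (hG0.mono fun j h => h)
    exact (tendsto_nhds_unique this tendsto_const_nhds)
  have hglim : Tendsto (fun j => x j ⬝ᵥ A.mulVec (x j)) atTop (nhds (xs ⬝ᵥ A.mulVec xs)) := by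
    have hAfull : ∀ i, Tendsto (fun j => (A.mulVec (x j)) i) atTop (nhds ((A.mulVec xs) i)) := by
      intro i
      simp only [mulVec, dotProduct]
      exact tendsto_finset_sum _ (fun l _ => ((hxi l).const_mul _))
    simp only [dotProduct]
    exact tendsto_finset_sum _ (fun i _ => (hxi i).mul (hAfull i))
  have hfeas : φ ≤ xs ⬝ᵥ A.mulVec xs := ge_of_tendsto' hglim hX
  have hΛ0 : φ < xs ⬝ᵥ A.mulVec xs → Λ = 0 := by
    intro hlt
    have hev : ∀ᶠ j in atTop, φ < x j ⬝ᵥ A.mulVec (x j) :=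
      hglim.eventually (eventually_gt_nhds hlt)
    have hev2 : ∀ᶠ j in atTop, lam0 (σ j)/s (σ j) = 0 := by
      filter_upwards [hσtop.eventually hev] with j hj
      have h1 := hlam2 (σ j)
      rcases mul_eq_zero.mp h1 with h | h
      · rw [h, zero_div]
      · exfalso; linarith [sub_eq_zero.mp h ▸ hj]
    exact tendsto_nhds_unique (hΛt.congr' (hev2.mono fun j h => h)) tendsto_const_nhds
  have hTpos : 0 < T := by
    rcases hTnn.eq_or_lt with hT0 | h
    swap
    · exact h
    exfalso
    rcases eq_or_lt_of_le hfeas with hactive | hinact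
    · have hli := hRob hactive.symm
      rw [Fintype.linearIndependent_iff] at hli
      have hzero : ∑ i : Fin 2, (![-Λ, C] : Fin 2 → ℝ) i •
          (![(fun i : {i : Fin N // i ∈ L} => A.mulVec xs i.1),
             (fun i : {i : Fin N // i ∈ L} => xs i.1)] : Fin 2 → ({i : Fin N // i ∈ L} → ℝ)) i = 0 := by
        rw [Fin.sum_univ_two]
        funext ⟨i, hi⟩
        simp only [Matrix.cons_val_zero, Matrix.cons_val_one, Matrix.head_cons,
          Pi.add_apply, Pi.smul_apply, Pi.zero_apply, smul_eq_mul]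
        have h1 := hlimeq i hi
        rw [← hT0, zero_mul] at h1
        linarith
      have h0 := hli ![-Λ, C] hzero 0
      have h1 := hli ![-Λ, C] hzero 1
      simp only [Matrix.cons_val_zero, Matrix.cons_val_one, Matrix.head_cons, neg_eq_zero] at h0 h1
      rw [← hT0, h0, h1] at hsum
      simp at hsum
    · have hΛz := hΛ0 hinact
      have hC1 : |C| = 1 := by rw [← hT0, hΛz] at hsum; linarith
      have hCne : C ≠ 0 := by intro h; rw [h] at hC1; simp at hC1
      have hxs0 : ∀ i, xs i = 0 := by
        intro i
        by_cases hi : i ∈ L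
        · have h1 := hlimeq i hi
          rw [← hT0, hΛz] at h1
          have h2 : C * xs i = 0 := by linarith
          exact (mul_eq_zero.mp h2).resolve_left hCne
        · exact hxsL i hi
      rw [Finset.sum_congr rfl (fun i _ => by rw [hxs0 i]; norm_num : ∀ i ∈ Finset.univ, xs i ^ 2 = 0)] at hsum1
      simp at hsum1
  have hTne : T ≠ 0 := hTpos.ne'
  refine ⟨Λ/T, C/T,
    fun i => if i ∈ L then 0 else -(M.mulVec xs i - (Λ/T)*(A.mulVec xs i) + (C/T)*xs i),
    div_nonneg hΛnn hTpos.le, fun i hi => if_pos hi, ?_, ?_, hfeas, hxnorm⟩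
  · funext i
    simp only [Pi.add_apply, Pi.sub_apply, Pi.smul_apply, Pi.zero_apply, smul_eq_mul]
    by_cases hi : i ∈ L
    · rw [if_pos hi]
      have h1 := hlimeq i hi
      field_simp
      linarith
    · rw [if_neg hi]
      ring
  · rcases eq_or_lt_of_le hfeas with he | hl
    · rw [← he, sub_self, mul_zero]
    · rw [hΛ0 hl, zero_div, zero_mul]
end

section
/- Let M and A be N×N real symmetric positive definite matrices, ρ > 0, φ > 0, and y ∈ ℝ^N. Then there exist w₁ > 0 and w₂ ∈ ℝ such that the (N+1)×(N+1) symmetric block matrix Z = [[ρ‖y‖₂² + w₁φ − w₂, −ρyᵀ], [−ρy, M + ρI_N − w₁A]] is positive definite. In other words, the dual of the SDP relaxation of the penalty subproblem is strictly feasible. -/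
open Matrix

lemma key_ineq (ρ s S P Qm Qa C t : ℝ) (hρ : 0 < ρ) (hs : 0 ≤ s) (hS : 0 ≤ S)
    (hP : P ^ 2 ≤ s * S) (hQm : 0 ≤ Qm) (hQa : Qa ≤ C * S) (hC : 0 ≤ C)
    (hne : 0 < t ^ 2 + S) :
    0 < (2 * ρ * s + 2) * t ^ 2 - 2 * ρ * t * P + (Qm + ρ * S - (ρ / (2 * (C + 1))) * Qa) := by
  have hw : 0 < ρ / (2 * (C + 1)) := by positivity
  have h1 : (ρ / (2 * (C + 1))) * Qa ≤ (ρ / 2) * S := by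
    calc (ρ / (2 * (C + 1))) * Qa ≤ (ρ / (2 * (C + 1))) * (C * S) :=
          mul_le_mul_of_nonneg_left hQa hw.le
      _ ≤ (ρ / 2) * S := by
          rw [div_mul_eq_mul_div, div_le_iff₀ (by positivity)]
          nlinarith
  have hε : (0:ℝ) < 2 * ρ * s + 1 := by positivity
  rcases eq_or_ne t 0 with ht | ht
  · subst ht
    have hS' : 0 < S := by simpa using hne
    nlinarith
  · have ht2 : 0 < t ^ 2 := by positivity
    have h3 : ρ ^ 2 * P ^ 2 ≤ ρ ^ 2 * (s * S) :=
      mul_le_mul_of_nonneg_left hP (by positivity)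
    have key2 : 0 < (2 * ρ * s + 1) *
        ((2 * ρ * s + 2) * t ^ 2 - 2 * ρ * t * P + (Qm + ρ * S - (ρ / (2 * (C + 1))) * Qa)) := by
      nlinarith [sq_nonneg ((2 * ρ * s + 1) * t - ρ * P), mul_pos hε ht2,
        mul_nonneg hρ.le hS, mul_nonneg (mul_nonneg hρ.le hρ.le) (mul_nonneg hs hS),
        mul_nonneg hε.le hQm, mul_nonneg hε.le (mul_nonneg hρ.le hS)]
    nlinarith [key2, hε]

/-- the dual of the SDP relaxation of the penalty subproblem is strictly
feasible: there exist `w₁ > 0` and `w₂ ∈ ℝ` making the dual slack block matrix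
`[[ρ‖y‖₂² + w₁φ − w₂, −ρyᵀ], [−ρy, M + ρI − w₁A]]` positive definite. -/
theorem stmt_9 {N : ℕ} (M A : Matrix (Fin N) (Fin N) ℝ) (hM : M.PosDef) (hA : A.PosDef)
    (ρ φ : ℝ) (hρ : 0 < ρ) (hφ : 0 < φ) (y : Fin N → ℝ) :
    ∃ w₁ w₂ : ℝ, 0 < w₁ ∧
      (Matrix.fromBlocks
        (fun _ _ => ρ * norm2 y ^ 2 + w₁ * φ - w₂ : Matrix Unit Unit ℝ)
        (fun _ j => -ρ * y j : Matrix Unit (Fin N) ℝ)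
        (fun i _ => -ρ * y i : Matrix (Fin N) Unit ℝ)
        (M + ρ • (1 : Matrix (Fin N) (Fin N) ℝ) - w₁ • A)).PosDef := by
  set s := ∑ i, y i ^ 2 with hs_def
  have hs : 0 ≤ s := Finset.sum_nonneg fun i _ => sq_nonneg _
  have hny : norm2 y ^ 2 = s := Real.sq_sqrt hs
  set C := ∑ i, ∑ j, |A i j| with hC_def
  have hC : 0 ≤ C := Finset.sum_nonneg fun i _ => Finset.sum_nonneg fun j _ => abs_nonneg _
  set w₁ := ρ / (2 * (C + 1)) with hw₁_def
  have hw₁ : 0 < w₁ := by positivity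
  refine ⟨w₁, ρ * norm2 y ^ 2 + w₁ * φ - (2 * ρ * s + 2), hw₁, Matrix.PosDef.of_dotProduct_mulVec_pos ?_ ?_⟩
  · -- Hermitian
    apply Matrix.isHermitian_fromBlocks_iff.2
    refine ⟨?_, ?_, ?_, ?_⟩
    · ext i j; exact (Matrix.conjTranspose_apply _ _ _).trans (by simp)
    · ext i j; exact (Matrix.conjTranspose_apply _ _ _).trans (by simp)
    · ext i j; exact (Matrix.conjTranspose_apply _ _ _).trans (by simp)
    · show _ᴴ = _
      rw [Matrix.conjTranspose_sub, Matrix.conjTranspose_add, Matrix.conjTranspose_smul,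
        Matrix.conjTranspose_smul, Matrix.conjTranspose_one, hM.1.eq, hA.1.eq,
        star_trivial, star_trivial]
  · -- positivity of quadratic form
    intro x hx
    set t := x (Sum.inl ()) with ht_def
    set v : Fin N → ℝ := x ∘ Sum.inr with hv_def
    set S := ∑ i, v i ^ 2 with hS_def
    have hS : 0 ≤ S := Finset.sum_nonneg fun i _ => sq_nonneg _
    set P := ∑ i, y i * v i with hP_def
    have hCS : P ^ 2 ≤ s * S := Finset.sum_mul_sq_le_sq_mul_sq _ _ _
    have hQm : 0 ≤ v ⬝ᵥ M *ᵥ v := by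
      have := hM.posSemidef.dotProduct_mulVec_nonneg v
      simpa using this
    have hQa : v ⬝ᵥ A *ᵥ v ≤ C * S := by
      have hsq : ∀ i, v i ^ 2 ≤ S := by
        intro i; rw [hS_def]
        exact Finset.single_le_sum (f := fun k => v k ^ 2) (fun k _ => sq_nonneg _) (Finset.mem_univ i)
      have hterm : ∀ i j, v i * (A i j * v j) ≤ |A i j| * S := by
        intro i j
        have h1 : v i * (A i j * v j) ≤ |A i j| * (|v i| * |v j|) := by
          calc v i * (A i j * v j) ≤ |v i * (A i j * v j)| := le_abs_self _
            _ = |A i j| * (|v i| * |v j|) := by rw [abs_mul, abs_mul]; ring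
        have h2 : |v i| * |v j| ≤ S := by
          nlinarith [sq_nonneg (|v i| - |v j|), sq_abs (v i), sq_abs (v j), hsq i, hsq j]
        calc v i * (A i j * v j) ≤ |A i j| * (|v i| * |v j|) := h1
          _ ≤ |A i j| * S := mul_le_mul_of_nonneg_left h2 (abs_nonneg _)
      calc v ⬝ᵥ A *ᵥ v = ∑ i, ∑ j, v i * (A i j * v j) := by
            simp [dotProduct, Matrix.mulVec, Finset.mul_sum]
        _ ≤ ∑ i, ∑ j, |A i j| * S :=
            Finset.sum_le_sum fun i _ => Finset.sum_le_sum fun j _ => hterm i j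
        _ = C * S := by rw [hC_def, Finset.sum_mul]; exact Finset.sum_congr rfl fun i _ => (Finset.sum_mul _ _ _).symm
    have hne : 0 < t ^ 2 + S := by
      rcases eq_or_ne t 0 with ht0 | ht0
      · have hv0 : v ≠ 0 := by
          intro h
          apply hx
          funext i
          rcases i with i | i
          · cases i; simpa [ht_def] using ht0
          · exact congrFun h i
        obtain ⟨i, hi⟩ := Function.ne_iff.1 hv0
        have : 0 < S := Finset.sum_pos' (fun k _ => sq_nonneg _)
          ⟨i, Finset.mem_univ i, (sq_nonneg _).lt_of_ne (Ne.symm (pow_ne_zero 2 hi))⟩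
        nlinarith
      · nlinarith [sq_nonneg t, pow_pos (abs_pos.2 ht0) 2, sq_abs t]
    have key := key_ineq ρ s S P (v ⬝ᵥ M *ᵥ v) (v ⬝ᵥ A *ᵥ v) C t hρ hs hS hCS hQm hQa hC hne
    have hrw : star x ⬝ᵥ (Matrix.fromBlocks
        (fun _ _ => ρ * norm2 y ^ 2 + w₁ * φ - (ρ * norm2 y ^ 2 + w₁ * φ - (2 * ρ * s + 2)) : Matrix Unit Unit ℝ)
        (fun _ j => -ρ * y j : Matrix Unit (Fin N) ℝ)
        (fun i _ => -ρ * y i : Matrix (Fin N) Unit ℝ)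
        (M + ρ • (1 : Matrix (Fin N) (Fin N) ℝ) - w₁ • A)) *ᵥ x =
        (2 * ρ * s + 2) * t ^ 2 - 2 * ρ * t * P +
          (v ⬝ᵥ M *ᵥ v + ρ * S - w₁ * (v ⬝ᵥ A *ᵥ v)) := by
      have hx_elim : x = Sum.elim (x ∘ Sum.inl) (x ∘ Sum.inr) := (Sum.elim_comp_inl_inr x).symm
      rw [show star x = x from rfl]
      conv_lhs => rw [hx_elim]
      erw [Matrix.fromBlocks_mulVec, sumElim_dotProduct_sumElim]
      rw [dotProduct_add, dotProduct_add]
      simp only [Sum.elim_comp_inl, Sum.elim_comp_inr, ← hv_def]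
      have hD : v ⬝ᵥ ((M + ρ • (1 : Matrix (Fin N) (Fin N) ℝ) - w₁ • A) *ᵥ v) =
          v ⬝ᵥ M *ᵥ v + ρ * S - w₁ * (v ⬝ᵥ A *ᵥ v) := by
        rw [Matrix.sub_mulVec, Matrix.add_mulVec, Matrix.smul_mulVec,
          Matrix.smul_mulVec, Matrix.one_mulVec, dotProduct_sub,
          dotProduct_add, dotProduct_smul, dotProduct_smul, hS_def]
        simp [dotProduct, pow_two]
      have e2 : ∀ u : Unit → ℝ, (u ⬝ᵥ (fun _ j => -ρ * y j : Matrix Unit (Fin N) ℝ) *ᵥ v) =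
          u () * (-ρ * P) := by
        intro u
        simp [dotProduct, Matrix.mulVec, hP_def, Finset.mul_sum]
        exact Finset.sum_congr rfl fun i _ => by ring
      have e3 : (v ⬝ᵥ (fun i _ => -ρ * y i : Matrix (Fin N) Unit ℝ) *ᵥ (x ∘ Sum.inl)) =
          -ρ * t * P := by
        simp [dotProduct, Matrix.mulVec, hP_def, ht_def, Finset.mul_sum]
        exact Finset.sum_congr rfl fun i _ => by ring
      rw [hD, e2, e3]
      simp [dotProduct, Matrix.mulVec, hny, ← ht_def]
      ring
    rw [hrw]
    exact key
end

section
/- Let Q₀ and Q₁ be N×N real symmetric matrices. Suppose Y* is an optimal solution of the SDP: minimize Tr(Q₀Y) subject to Tr(Q₁Y) ≤ −1, Tr(Y) = 1, and Y ⪰ 0 (i.e., Y* is feasible and Tr(Q₀Y*) ≤ Tr(Q₀Y) for all feasible Y). If the first constraint is inactive at Y*, i.e., Tr(Q₁Y*) < −1, then the optimal value equals the smallest eigenvalue of Q₀: Tr(Q₀Y*) = λ_min(Q₀). -/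
open Matrix

lemma aux_smul_psd {N : ℕ} {A : Matrix (Fin N) (Fin N) ℝ} (hA : A.PosSemidef)
    {c : ℝ} (hc : 0 ≤ c) : (c • A).PosSemidef := by
  refine posSemidef_iff_dotProduct_mulVec.mpr ⟨?_, fun x => ?_⟩
  · unfold Matrix.IsHermitian
    rw [conjTranspose_smul, hA.1.eq]
    simp
  · rw [smul_mulVec, dotProduct_smul, smul_eq_mul]
    exact mul_nonneg hc (hA.dotProduct_mulVec_nonneg x)

lemma aux_trace_mul_vecMulVec {N : ℕ} (Q : Matrix (Fin N) (Fin N) ℝ) (v : Fin N → ℝ) :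
    (Q * vecMulVec v v).trace = v ⬝ᵥ (Q *ᵥ v) := by
  simp only [Matrix.trace, Matrix.diag, Matrix.mul_apply, vecMulVec_apply, dotProduct,
    mulVec, Finset.mul_sum]
  exact Finset.sum_congr rfl fun i _ => Finset.sum_congr rfl fun j _ => by ring

lemma aux_trace_mul_nonneg {N : ℕ} {A B : Matrix (Fin N) (Fin N) ℝ}
    (hA : A.PosSemidef) (hB : B.PosSemidef) : 0 ≤ (A * B).trace := by
  obtain ⟨C, rfl⟩ : ∃ C : Matrix (Fin N) (Fin N) ℝ, B = Cᴴ * C := by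
    open scoped MatrixOrder in
    obtain ⟨C, hC⟩ := CStarAlgebra.nonneg_iff_eq_star_mul_self.mp hB.nonneg
    exact ⟨C, hC⟩
  rw [← Matrix.mul_assoc, Matrix.trace_mul_cycle]
  have : ∀ i, 0 ≤ (C * A * Cᴴ) i i := by
    intro i
    have h := hA.dotProduct_mulVec_nonneg (fun j => C i j)
    simp only [dotProduct, mulVec, Pi.star_apply, star_trivial, Matrix.mul_apply,
      conjTranspose_apply, Finset.mul_sum] at h ⊢
    calc (0:ℝ) ≤ ∑ j, ∑ k, C i j * (A j k * C i k) := h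
    _ = ∑ k, (∑ j, C i j * A j k) * C i k := by
        rw [Finset.sum_comm]
        exact Finset.sum_congr rfl fun k _ => by rw [Finset.sum_mul]; exact Finset.sum_congr rfl fun j _ => by ring
  exact Finset.sum_nonneg fun i _ => this i


/-- if the optimal solution `Y*` of
`min Tr(Q₀Y) s.t. Tr(Q₁Y) ≤ −1, Tr Y = 1, Y ⪰ 0` has the first constraint inactive
(`Tr(Q₁Y*) < −1`), then the optimal value equals `λ_min(Q₀)`. -/
theorem stmt_13 {N : ℕ} (Q₀ Q₁ : Matrix (Fin N) (Fin N) ℝ)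
    (hQ0 : Q₀.IsHermitian) (hQ1 : Q₁.IsHermitian)
    (Y : Matrix (Fin N) (Fin N) ℝ) (hYpsd : Y.PosSemidef) (hYtr : Y.trace = 1)
    (hYfeas : (Q₁ * Y).trace ≤ -1)
    (hopt : ∀ Z : Matrix (Fin N) (Fin N) ℝ, Z.PosSemidef → Z.trace = 1 →
        (Q₁ * Z).trace ≤ -1 → (Q₀ * Y).trace ≤ (Q₀ * Z).trace)
    (hinactive : (Q₁ * Y).trace < -1) :
    (Q₀ * Y).trace = ⨅ i, hQ0.eigenvalues i := by
  have hne : Nonempty (Fin N) := by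
    rcases Nat.eq_zero_or_pos N with h | h
    · exfalso; subst h; simp [Matrix.trace] at hYtr
    · exact ⟨⟨0, h⟩⟩
  obtain ⟨i₀, hi₀⟩ := Finite.exists_min hQ0.eigenvalues
  have hiInf : ⨅ i, hQ0.eigenvalues i = hQ0.eigenvalues i₀ :=
    le_antisymm (ciInf_le (Finite.bddBelow_range _) i₀) (le_ciInf hi₀)
  set lam := hQ0.eigenvalues i₀ with hlam
  set v : Fin N → ℝ := ⇑(hQ0.eigenvectorBasis i₀) with hv
  -- norm of v
  have hvv : v ⬝ᵥ v = 1 := by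
    have h1 : ‖hQ0.eigenvectorBasis i₀‖ = 1 := hQ0.eigenvectorBasis.orthonormal.1 i₀
    have h2 : (inner ℝ (hQ0.eigenvectorBasis i₀) (hQ0.eigenvectorBasis i₀) : ℝ) = 1 := by
      rw [real_inner_self_eq_norm_sq, h1]; norm_num
    rw [PiLp.inner_apply] at h2
    simpa [dotProduct, hv, ← sq] using h2
  have hQv : Q₀ *ᵥ v = lam • v := hQ0.mulVec_eigenvectorBasis i₀
  set Z := vecMulVec v v with hZ
  have hZpsd : Z.PosSemidef := by
    have : Z = (replicateRow (Fin 1) v)ᴴ * replicateRow (Fin 1) v := by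
      rw [conjTranspose_replicateRow, hZ, vecMulVec_eq (Fin 1)]
      rfl
    rw [this]; exact posSemidef_conjTranspose_mul_self _
  have hZtr : Z.trace = 1 := by
    simpa [hZ, Matrix.trace, Matrix.diag, vecMulVec_apply, dotProduct] using hvv
  have hQ0Z : (Q₀ * Z).trace = lam := by
    rw [hZ, aux_trace_mul_vecMulVec, hQv, dotProduct_smul, smul_eq_mul, hvv, mul_one]
  set a := (Q₁ * Y).trace with ha
  set b := (Q₁ * Z).trace with hb
  have hε : 0 < -1 - a := by linarith
  set t := min 1 ((-1 - a) / (|b - a| + 1)) with htdef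
  have hden : (0:ℝ) < |b - a| + 1 := by positivity
  have ht0 : 0 < t := lt_min one_pos (div_pos hε hden)
  have ht1 : t ≤ 1 := min_le_left _ _
  have ht2 : t * (|b - a| + 1) ≤ -1 - a := by
    have h3 : t ≤ (-1 - a) / (|b - a| + 1) := min_le_right _ _
    calc t * (|b - a| + 1) ≤ ((-1 - a) / (|b - a| + 1)) * (|b - a| + 1) := by
          exact mul_le_mul_of_nonneg_right h3 hden.le
    _ = -1 - a := div_mul_cancel₀ _ hden.ne'
  set W := (1 - t) • Y + t • Z with hW
  have hWpsd : W.PosSemidef :=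
    (aux_smul_psd hYpsd (by linarith)).add (aux_smul_psd hZpsd ht0.le)
  have hWtr : W.trace = 1 := by
    rw [hW, trace_add, trace_smul, trace_smul, hYtr, hZtr]
    simp
  have htr1 : ∀ Q : Matrix (Fin N) (Fin N) ℝ,
      (Q * W).trace = (1 - t) * (Q * Y).trace + t * (Q * Z).trace := by
    intro Q
    rw [hW, Matrix.mul_add, trace_add, Matrix.mul_smul, Matrix.mul_smul, trace_smul, trace_smul]
    simp
  have hWfeas : (Q₁ * W).trace ≤ -1 := by
    rw [htr1, ← ha, ← hb]
    have habs : b - a ≤ |b - a| := le_abs_self _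
    nlinarith [abs_nonneg (b - a), ht0.le]
  have key := hopt W hWpsd hWtr hWfeas
  rw [htr1, hQ0Z] at key
  have upper : (Q₀ * Y).trace ≤ lam := by nlinarith
  -- lower bound
  have hUU : (hQ0.eigenvectorUnitary : Matrix (Fin N) (Fin N) ℝ) *
      star (hQ0.eigenvectorUnitary : Matrix (Fin N) (Fin N) ℝ) = 1 :=
    mem_unitaryGroup_iff.mp hQ0.eigenvectorUnitary.2
  have hdecomp : Q₀ - lam • 1 = (hQ0.eigenvectorUnitary : Matrix (Fin N) (Fin N) ℝ) *
      diagonal (fun i => hQ0.eigenvalues i - lam) *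
      star (hQ0.eigenvectorUnitary : Matrix (Fin N) (Fin N) ℝ) := by
    have hone : (lam • (1 : Matrix (Fin N) (Fin N) ℝ)) = diagonal (fun _ => lam) := by
      ext i j
      by_cases h : i = j <;> simp [Matrix.one_apply, diagonal_apply, h]
    have hdiag : diagonal (fun i => hQ0.eigenvalues i - lam)
        = diagonal (RCLike.ofReal ∘ hQ0.eigenvalues) - lam • (1 : Matrix (Fin N) (Fin N) ℝ) := by
      rw [hone, ← diagonal_sub]
      congr 1
    rw [hdiag, Matrix.mul_sub, Matrix.sub_mul, ← Unitary.conjStarAlgAut_apply (S := ℝ), ← hQ0.spectral_theorem]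
    congr 1
    rw [Matrix.mul_smul, Matrix.smul_mul, Matrix.mul_one, hUU]
  have hpsd2 : (Q₀ - lam • 1).PosSemidef := by
    rw [hdecomp]
    have hd : ((diagonal (fun i => hQ0.eigenvalues i - lam)) :
        Matrix (Fin N) (Fin N) ℝ).PosSemidef :=
      PosSemidef.diagonal (fun i => sub_nonneg.mpr (hi₀ i))
    simpa [Matrix.star_eq_conjTranspose] using
      hd.mul_mul_conjTranspose_same (hQ0.eigenvectorUnitary : Matrix (Fin N) (Fin N) ℝ)
  have h0 := aux_trace_mul_nonneg hpsd2 hYpsd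
  rw [Matrix.sub_mul, trace_sub, Matrix.smul_mul, Matrix.one_mul, trace_smul, hYtr] at h0
  simp only [smul_eq_mul, mul_one] at h0
  rw [hiInf]
  linarith
end

section
/- Let M and A be N×N real symmetric positive definite matrices, φ > 0, k ∈ ℕ with 1 ≤ k ≤ N, and ρ > 0. Define q_ρ(x,y) = xᵀMx + ρ‖x−y‖₂², X = {x ∈ ℝ^N : xᵀAx ≥ φ}, and Y = {y ∈ ℝ^N : yᵀy = 1, ‖y‖₀ ≤ k}. Then q_ρ attains its minimum on X × Y; that is, the penalized problem (P_{x,y}) has an optimal solution. -/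
open Matrix

lemma qpen_eq {N : ℕ} (M : Matrix (Fin N) (Fin N) ℝ) (ρ : ℝ) (x y : Fin N → ℝ) :
    qpen M ρ x y = x ⬝ᵥ M.mulVec x + ρ * ∑ i, (x i - y i) ^ 2 := by
  have h : norm2 (x - y) ^ 2 = ∑ i, (x i - y i) ^ 2 := by
    rw [norm2, Real.sq_sqrt (Finset.sum_nonneg fun i _ => sq_nonneg _)]
    simp [Pi.sub_apply]
  rw [qpen, h]

lemma cont_quad {N : ℕ} (M : Matrix (Fin N) (Fin N) ℝ) :
    Continuous fun x : Fin N → ℝ => x ⬝ᵥ M.mulVec x := by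
  simp only [dotProduct, mulVec]; fun_prop

lemma cont_qpen {N : ℕ} (M : Matrix (Fin N) (Fin N) ℝ) (ρ : ℝ) :
    Continuous fun p : (Fin N → ℝ) × (Fin N → ℝ) => qpen M ρ p.1 p.2 := by
  simp only [qpen_eq]
  apply Continuous.add
  · exact (cont_quad M).comp continuous_fst
  · apply Continuous.mul continuous_const
    apply continuous_finset_sum
    intro i _
    fun_prop

lemma isClosed_card0 {N : ℕ} (k : ℕ) : IsClosed {y : Fin N → ℝ | card0 y ≤ k} := by
  have heq : {y : Fin N → ℝ | card0 y ≤ k}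
      = ⋃ s ∈ {s : Finset (Fin N) | s.card ≤ k}, {y | ∀ i ∉ s, y i = 0} := by
    ext y
    simp only [Set.mem_setOf_eq, Set.mem_iUnion, exists_prop]
    constructor
    · intro h
      exact ⟨Finset.univ.filter fun i => y i ≠ 0, h, fun i hi => by
        by_contra hne; exact hi (Finset.mem_filter.2 ⟨Finset.mem_univ i, hne⟩)⟩
    · rintro ⟨s, hs, hzero⟩
      refine le_trans (Finset.card_le_card ?_) hs
      intro i hi
      rw [Finset.mem_filter] at hi
      by_contra hns
      exact hi.2 (hzero i hns)
  rw [heq]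
  apply Set.Finite.isClosed_biUnion (Set.toFinite _)
  intro s _
  have : {y : Fin N → ℝ | ∀ i ∉ s, y i = 0} = ⋂ i ∈ (sᶜ : Finset (Fin N)), {y | y i = 0} := by
    ext y; simp [Finset.mem_compl]
  rw [this]
  apply isClosed_biInter
  intro i _
  exact isClosed_eq (continuous_apply i) continuous_const

-- coercivity
lemma quad_lower {N : ℕ} (M : Matrix (Fin N) (Fin N) ℝ) (hM : M.PosDef) (hN : 0 < N) :
    ∃ μ > 0, ∀ x : Fin N → ℝ, μ * ∑ i, x i ^ 2 ≤ x ⬝ᵥ M.mulVec x := by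
  set S : Set (Fin N → ℝ) := {x | ∑ i, x i ^ 2 = 1} with hS
  have hScl : IsClosed S := isClosed_eq (by fun_prop) continuous_const
  have hSbd : S ⊆ Metric.closedBall 0 1 := by
    intro x hx
    rw [Metric.mem_closedBall, dist_zero_right, pi_norm_le_iff_of_nonneg zero_le_one]
    intro i
    rw [Real.norm_eq_abs, abs_le]
    have h1 : x i ^ 2 ≤ 1 := hx ▸ Finset.single_le_sum (fun j _ => sq_nonneg (x j)) (Finset.mem_univ i)
    constructor <;> nlinarith
  have hScompact : IsCompact S :=
    (isCompact_closedBall (0 : Fin N → ℝ) 1).of_isClosed_subset hScl hSbd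
  have : Nonempty (Fin N) := ⟨⟨0, hN⟩⟩
  have hSne : S.Nonempty := by
    refine ⟨Pi.single ⟨0, hN⟩ 1, ?_⟩
    simp [hS, Pi.single_apply, Finset.sum_ite_eq']
  obtain ⟨u, huS, humin⟩ := hScompact.exists_isMinOn hSne (cont_quad M).continuousOn
  refine ⟨u ⬝ᵥ M.mulVec u, ?_, ?_⟩
  · refine lt_of_lt_of_eq (hM.dotProduct_mulVec_pos (x := u) ?_) (by simp)
    intro h
    rw [h] at huS
    simp [hS] at huS
  · intro x
    by_cases hx : x = 0
    · simp [hx]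
    · have hsum : 0 < ∑ i, x i ^ 2 := by
        rcases Function.ne_iff.mp hx with ⟨i, hi⟩
        simp only [Pi.zero_apply] at hi
        exact Finset.sum_pos' (fun j _ => sq_nonneg _)
          ⟨i, Finset.mem_univ i, by positivity⟩
      set t : ℝ := Real.sqrt (∑ i, x i ^ 2) with ht
      have htpos : 0 < t := Real.sqrt_pos.2 hsum
      have ht2 : t ^ 2 = ∑ i, x i ^ 2 := Real.sq_sqrt hsum.le
      have hmem : (t⁻¹ • x) ∈ S := by
        simp only [hS, Set.mem_setOf_eq, Pi.smul_apply, smul_eq_mul, mul_pow,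
          ← Finset.mul_sum]
        rw [← ht2]
        field_simp
      have hle := humin hmem
      have hval : (t⁻¹ • x) ⬝ᵥ M.mulVec (t⁻¹ • x) = (t⁻¹)^2 * (x ⬝ᵥ M.mulVec x) := by
        simp [Matrix.mulVec_smul, smul_dotProduct, dotProduct_smul, smul_eq_mul]; ring
      simp only [Set.mem_setOf_eq] at hle
      rw [hval] at hle
      calc u ⬝ᵥ M.mulVec u * ∑ i, x i ^ 2
          = u ⬝ᵥ M.mulVec u * t ^ 2 := by rw [ht2]
        _ ≤ (t⁻¹ ^ 2 * (x ⬝ᵥ M.mulVec x)) * t ^ 2 :=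
            mul_le_mul_of_nonneg_right hle (by positivity)
        _ = x ⬝ᵥ M.mulVec x := by field_simp


/-- the penalized problem `(P_{x,y})` has an optimal solution, i.e.
`q_ρ` attains its minimum on `X × Y`. -/
theorem stmt_17 {N : ℕ} (M A : Matrix (Fin N) (Fin N) ℝ) (hM : M.PosDef) (hA : A.PosDef)
    (φ ρ : ℝ) (hφ : 0 < φ) (hρ : 0 < ρ) (k : ℕ) (hk1 : 1 ≤ k) (hkN : k ≤ N) :
    ∃ x y : Fin N → ℝ, (φ ≤ x ⬝ᵥ A.mulVec x) ∧ (y ⬝ᵥ y = 1 ∧ card0 y ≤ k) ∧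
      ∀ x' y' : Fin N → ℝ, φ ≤ x' ⬝ᵥ A.mulVec x' → y' ⬝ᵥ y' = 1 → card0 y' ≤ k →
        qpen M ρ x y ≤ qpen M ρ x' y' := by
  have hN : 0 < N := lt_of_lt_of_le hk1 hkN
  set i0 : Fin N := ⟨0, hN⟩
  set e : Fin N → ℝ := Pi.single i0 1 with he
  have he_ne : e ≠ 0 := by
    intro h
    have := congrFun h i0
    simp [he, Pi.single_apply] at this
  have he_dot : e ⬝ᵥ e = 1 := by
    simp [he, dotProduct, Pi.single_apply, Finset.sum_ite_eq']
  have he_card : card0 e ≤ k := by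
    have : card0 e = 1 := by
      rw [card0]
      have : (Finset.univ.filter fun i => e i ≠ 0) = {i0} := by
        ext i
        simp [he, Pi.single_apply]
      rw [this, Finset.card_singleton]
    omega
  set a : ℝ := e ⬝ᵥ A.mulVec e with ha_def
  have ha : 0 < a := lt_of_lt_of_eq (hA.dotProduct_mulVec_pos he_ne) (by simp [ha_def])
  set t : ℝ := Real.sqrt (φ / a) with ht
  have ht2 : t ^ 2 = φ / a := Real.sq_sqrt (by positivity)
  set x₀ : Fin N → ℝ := t • e with hx₀def
  have hx₀A : x₀ ⬝ᵥ A.mulVec x₀ = φ := by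
    have : (t • e) ⬝ᵥ A.mulVec (t • e) = t ^ 2 * a := by
      simp [Matrix.mulVec_smul, smul_dotProduct, dotProduct_smul, smul_eq_mul, ha_def]
      ring
    rw [hx₀def, this, ht2]
    field_simp
  set c : ℝ := qpen M ρ x₀ e with hc_def
  obtain ⟨μ, hμ, hquad⟩ := quad_lower M hM hN
  -- lower bound on qpen
  have hqlb : ∀ x y : Fin N → ℝ, x ⬝ᵥ M.mulVec x ≤ qpen M ρ x y := by
    intro x y
    rw [qpen_eq]
    have h1 : (0:ℝ) ≤ ∑ i, (x i - y i) ^ 2 := Finset.sum_nonneg fun i _ => sq_nonneg _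
    nlinarith
  set R : ℝ := Real.sqrt (max (c / μ) 1) with hR
  have hRsq : R ^ 2 = max (c / μ) 1 :=
    Real.sq_sqrt (le_trans zero_le_one (le_max_right _ _))
  have hball : ∀ v : Fin N → ℝ, (∑ i, v i ^ 2) ≤ R ^ 2 → v ∈ Metric.closedBall 0 R := by
    intro v hv
    rw [Metric.mem_closedBall, dist_zero_right,
      pi_norm_le_iff_of_nonneg (Real.sqrt_nonneg _)]
    intro i
    rw [Real.norm_eq_abs, abs_le]
    have h1 : v i ^ 2 ≤ R ^ 2 :=
      le_trans (Finset.single_le_sum (fun j _ => sq_nonneg (v j)) (Finset.mem_univ i)) hv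
    have hR0 : 0 ≤ R := Real.sqrt_nonneg _
    constructor <;> nlinarith
  set K : Set ((Fin N → ℝ) × (Fin N → ℝ)) :=
    {p | φ ≤ p.1 ⬝ᵥ A.mulVec p.1 ∧ p.2 ⬝ᵥ p.2 = 1 ∧ card0 p.2 ≤ k ∧ qpen M ρ p.1 p.2 ≤ c}
    with hK
  have hKclosed : IsClosed K := by
    have h1 : IsClosed {p : (Fin N → ℝ) × (Fin N → ℝ) | φ ≤ p.1 ⬝ᵥ A.mulVec p.1} :=
      isClosed_le continuous_const ((cont_quad A).comp continuous_fst)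
    have h2 : IsClosed {p : (Fin N → ℝ) × (Fin N → ℝ) | p.2 ⬝ᵥ p.2 = 1} := by
      apply isClosed_eq _ continuous_const
      simp only [dotProduct]
      fun_prop
    have h3 : IsClosed {p : (Fin N → ℝ) × (Fin N → ℝ) | card0 p.2 ≤ k} :=
      (isClosed_card0 k).preimage continuous_snd
    have h4 : IsClosed {p : (Fin N → ℝ) × (Fin N → ℝ) | qpen M ρ p.1 p.2 ≤ c} :=
      isClosed_le (cont_qpen M ρ) continuous_const
    have : K = ({p : (Fin N → ℝ) × (Fin N → ℝ) | φ ≤ p.1 ⬝ᵥ A.mulVec p.1} ∩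
        {p | p.2 ⬝ᵥ p.2 = 1}) ∩ ({p | card0 p.2 ≤ k} ∩ {p | qpen M ρ p.1 p.2 ≤ c}) := by
      ext p
      simp only [hK, Set.mem_setOf_eq, Set.mem_inter_iff]
      tauto
    rw [this]
    exact ((h1.inter h2).inter (h3.inter h4))
  have hKsub : K ⊆ Metric.closedBall 0 R ×ˢ Metric.closedBall 0 R := by
    rintro ⟨x, y⟩ ⟨hxA, hy1, hy2, hq⟩
    constructor
    · apply hball
      have h1 : μ * ∑ i, x i ^ 2 ≤ c := le_trans (hquad x) (le_trans (hqlb x y) hq)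
      have h2 : ∑ i, x i ^ 2 ≤ c / μ := by
        rw [le_div_iff₀ hμ] at *
        linarith [h1]
      rw [hRsq]
      exact le_trans h2 (le_max_left _ _)
    · apply hball
      have : ∑ i, y i ^ 2 = 1 := by
        rw [← hy1]
        simp [dotProduct, sq]
      rw [this, hRsq]
      exact le_max_right _ _
  have hKcompact : IsCompact K :=
    ((isCompact_closedBall _ _).prod (isCompact_closedBall _ _)).of_isClosed_subset
      hKclosed hKsub
  have hmem : (x₀, e) ∈ K := ⟨le_of_eq hx₀A.symm, he_dot, he_card, le_refl c⟩
  obtain ⟨p, hpK, hpmin⟩ := hKcompact.exists_isMinOn ⟨(x₀, e), hmem⟩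
    (cont_qpen M ρ).continuousOn
  refine ⟨p.1, p.2, hpK.1, ⟨hpK.2.1, hpK.2.2.1⟩, ?_⟩
  intro x' y' hx' hy1 hy2
  by_cases hcc : qpen M ρ x' y' ≤ c
  · have := hpmin (show (x', y') ∈ K from ⟨hx', hy1, hy2, hcc⟩)
    simpa using this
  · have h1 : qpen M ρ p.1 p.2 ≤ c := hpK.2.2.2
    linarith [not_le.mp hcc]
end
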